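/- For random descent iterates, E(‖Av^{k+1} − b‖²) ≤ (1 − λ_min(M)σ_min(A)²)·E(‖Av^k − b‖²) and also E(‖Av^{k+1} − b‖²) ≤ (1 − λ_min(A M Aᵀ))·E(‖Av^k − b‖²), where M = E(xxᵀ/‖Ax‖²). -/

import Mathlib

/-!
Exact linesearch makes a step the orthogonal projection of the residual `r = A v - b` away from
`A x`, so `‖r_{k+1}‖² = ‖r_k‖² - (Aᵀ r_k ⬝ᵥ x_k)² / ‖A x_k‖²`; in particular residuals never grow,
which keeps everything bounded and integrable. The iterate `v_k` is a measurable
function of `x_0, …, x_{k-1}`, hence independent of `x_k`, so the expected decrease is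
`E[(Aᵀ r_k)ᵀ M (Aᵀ r_k)]`. This quadratic form is at least `λ_min(M) ‖Aᵀ r_k‖²`, and
`‖Aᵀ r‖ ≥ σ_min(A) ‖r‖` because `r_k = A (v_k - v̂)` lies in the range of `A`; it also equals
`r_kᵀ (A M Aᵀ) r_k ≥ λ_min(A M Aᵀ) ‖r_k‖²`.
-/

open MeasureTheory ProbabilityTheory Matrix

/-- One step of random descent with exact linesearch. -/
noncomputable def rdStep {d m : ℕ} (A : Matrix (Fin m) (Fin d) ℝ) (b : Fin m → ℝ)
    (v x : Fin d → ℝ) : Fin d → ℝ :=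
  v - (((A.mulVec v - b) ⬝ᵥ A.mulVec x) / (A.mulVec x ⬝ᵥ A.mulVec x)) • x

/-- The smallest positive singular value of `A`. -/
noncomputable def sigmaMinPos {m d : ℕ} (A : Matrix (Fin m) (Fin d) ℝ) : ℝ :=
  sInf {s : ℝ | 0 < s ∧ ∃ w : Fin d → ℝ, w ≠ 0 ∧ (Aᵀ * A).mulVec w = (s ^ 2) • w}

namespace Matrix

variable {n : Type*} [Fintype n]

lemma dotProduct_mulVec_eq_sum_sum (B : Matrix n n ℝ) (c : n → ℝ) :
    c ⬝ᵥ B *ᵥ c = ∑ i, ∑ j, B i j * (c i * c j) := by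
  simp only [dotProduct, mulVec, Finset.mul_sum]
  exact Finset.sum_congr rfl fun i _ => Finset.sum_congr rfl fun j _ => by ring

lemma sq_dotProduct_div_eq_dotProduct_mulVec (c y : n → ℝ) (s : ℝ) :
    (c ⬝ᵥ y) ^ 2 / s = c ⬝ᵥ of (fun i j => y i * y j / s) *ᵥ c := by
  rw [dotProduct_mulVec_eq_sum_sum, sq, dotProduct, Finset.sum_mul_sum, Finset.sum_div]
  refine Finset.sum_congr rfl fun i _ => ?_
  rw [Finset.sum_div]
  exact Finset.sum_congr rfl fun j _ => by simp only [of_apply]; ring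

lemma dotProduct_self_nonneg (c : n → ℝ) : 0 ≤ c ⬝ᵥ c :=
  Fintype.sum_nonneg fun i => mul_self_nonneg (c i)

lemma abs_mul_le_dotProduct_self (c : n → ℝ) (i j : n) : |c i * c j| ≤ c ⬝ᵥ c := by
  have hsq : ∀ l, c l ^ 2 ≤ c ⬝ᵥ c := fun l =>
    (sq (c l)).trans_le <| Finset.single_le_sum (f := fun l => c l * c l)
      (fun l _ => mul_self_nonneg _) (Finset.mem_univ l)
  rw [abs_mul]
  nlinarith [hsq i, hsq j, sq_abs (c i), sq_abs (c j), sq_nonneg (|c i| - |c j|)]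

lemma dotProduct_self_sub_proj (r z : n → ℝ) :
    (r - ((r ⬝ᵥ z) / (z ⬝ᵥ z)) • z) ⬝ᵥ (r - ((r ⬝ᵥ z) / (z ⬝ᵥ z)) • z)
      = r ⬝ᵥ r - (r ⬝ᵥ z) ^ 2 / (z ⬝ᵥ z) := by
  by_cases hz : z ⬝ᵥ z = 0
  · simp [hz]
  · simp only [sub_dotProduct, dotProduct_sub, smul_dotProduct, dotProduct_smul, smul_eq_mul,
      dotProduct_comm z r]
    field_simp
    ring

lemma mulVec_dotProduct_self_le {m : Type*} [Fintype m] (B : Matrix m n ℝ) (r : n → ℝ) :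
    B *ᵥ r ⬝ᵥ B *ᵥ r ≤ (∑ i, ∑ j, B i j ^ 2) * (r ⬝ᵥ r) := by
  simp only [dotProduct, mulVec, ← sq]
  rw [Finset.sum_mul]
  exact Finset.sum_le_sum fun i _ => Finset.sum_mul_sq_le_sq_mul_sq _ _ _

lemma transpose_mulVec_dotProduct_mulVec {m : Type*} [Fintype m] (A : Matrix m n ℝ)
    (M : Matrix n n ℝ) (s : m → ℝ) :
    Aᵀ *ᵥ s ⬝ᵥ M *ᵥ (Aᵀ *ᵥ s) = s ⬝ᵥ (A * M * Aᵀ) *ᵥ s := by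
  rw [← mulVec_mulVec, ← mulVec_mulVec, dotProduct_mulVec s, mulVec_transpose]

lemma _root_.OrthonormalBasis.dotProduct_eq_sum {ι : Type*} [Fintype ι]
    (e : OrthonormalBasis ι ℝ (EuclideanSpace ℝ n)) (r s : n → ℝ) :
    r ⬝ᵥ s = ∑ i, (⇑(e i) ⬝ᵥ r) * (⇑(e i) ⬝ᵥ s) := by
  have h := e.sum_inner_mul_inner (WithLp.toLp 2 r) (WithLp.toLp 2 s)
  simp only [EuclideanSpace.inner_eq_star_dotProduct, star_trivial] at h
  simp_rw [dotProduct_comm r s, ← h, dotProduct_comm s]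

variable [DecidableEq n]

lemma setOf_mulVec_eq_smul_eq_spectrum {K : Type*} [Field K] (B : Matrix n n K) :
    {t : K | ∃ w : n → K, w ≠ 0 ∧ B *ᵥ w = t • w} = spectrum K B := by
  ext t
  rw [← spectrum_toLin', ← Module.End.hasEigenvalue_iff_mem_spectrum,
    Module.End.hasEigenvalue_iff, Submodule.ne_bot_iff]
  simp only [Module.End.mem_eigenspace_iff, toLin'_apply]
  exact ⟨fun ⟨w, hw, h⟩ => ⟨w, h, hw⟩, fun ⟨w, h, hw⟩ => ⟨w, hw, h⟩⟩

namespace IsHermitian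

variable {B : Matrix n n ℝ}

lemma dotProduct_mulVec_eq_sum (hB : B.IsHermitian) (r : n → ℝ) :
    r ⬝ᵥ B *ᵥ r = ∑ i, hB.eigenvalues i * (⇑(hB.eigenvectorBasis i) ⬝ᵥ r) ^ 2 := by
  have hBT : Bᵀ = B := by simpa only [conjTranspose_eq_transpose_of_trivial] using hB.eq
  rw [hB.eigenvectorBasis.dotProduct_eq_sum r (B *ᵥ r)]
  refine Finset.sum_congr rfl fun i _ => ?_
  rw [dotProduct_mulVec, ← mulVec_transpose, hBT, hB.mulVec_eigenvectorBasis, smul_dotProduct,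
    smul_eq_mul]
  ring

lemma sInf_le_eigenvalues (hB : B.IsHermitian) (i : n) :
    sInf {t : ℝ | ∃ w : n → ℝ, w ≠ 0 ∧ B *ᵥ w = t • w} ≤ hB.eigenvalues i := by
  rw [setOf_mulVec_eq_smul_eq_spectrum, hB.spectrum_real_eq_range_eigenvalues]
  exact csInf_le (Set.finite_range _).bddBelow ⟨i, rfl⟩

lemma sInf_mul_dotProduct_self_le (hB : B.IsHermitian) (r : n → ℝ) :
    sInf {t : ℝ | ∃ w : n → ℝ, w ≠ 0 ∧ B *ᵥ w = t • w} * (r ⬝ᵥ r) ≤ r ⬝ᵥ B *ᵥ r := by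
  rw [hB.dotProduct_mulVec_eq_sum, hB.eigenvectorBasis.dotProduct_eq_sum r r, Finset.mul_sum]
  refine Finset.sum_le_sum fun i _ => ?_
  rw [← sq]
  exact mul_le_mul_of_nonneg_right (hB.sInf_le_eigenvalues i) (sq_nonneg _)

end IsHermitian

lemma PosSemidef.sInf_nonneg {B : Matrix n n ℝ} (hB : B.PosSemidef) :
    0 ≤ sInf {t : ℝ | ∃ w : n → ℝ, w ≠ 0 ∧ B *ᵥ w = t • w} := by
  rw [setOf_mulVec_eq_smul_eq_spectrum, hB.1.spectrum_real_eq_range_eigenvalues]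
  exact Real.sInf_nonneg (Set.forall_mem_range.2 hB.eigenvalues_nonneg)

end Matrix

lemma sigmaMinPos_nonneg {m d : ℕ} (A : Matrix (Fin m) (Fin d) ℝ) : 0 ≤ sigmaMinPos A :=
  Real.sInf_nonneg fun _ hs => hs.1.le

lemma sigmaMinPos_sq_le {m d : ℕ} (A : Matrix (Fin m) (Fin d) ℝ) {μ : ℝ} (hμ : 0 < μ)
    {w : Fin d → ℝ} (hw : w ≠ 0) (hAw : (Aᵀ * A) *ᵥ w = μ • w) : sigmaMinPos A ^ 2 ≤ μ := by
  have hle : sigmaMinPos A ≤ √μ :=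
    csInf_le ⟨0, fun _ hs => hs.1.le⟩ ⟨Real.sqrt_pos.2 hμ, w, hw, by rwa [Real.sq_sqrt hμ.le]⟩
  calc sigmaMinPos A ^ 2 ≤ √μ ^ 2 := pow_le_pow_left₀ (sigmaMinPos_nonneg A) hle 2
    _ = μ := Real.sq_sqrt hμ.le

/-- On `range A` the eigencomponents of `A Aᵀ` with eigenvalue `0` vanish, and every positive
eigenvalue of `A Aᵀ` is also one of `Aᵀ A`. -/
lemma sigmaMinPos_sq_mul_le {m d : ℕ} (A : Matrix (Fin m) (Fin d) ℝ) (u : Fin d → ℝ) :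
    sigmaMinPos A ^ 2 * (A *ᵥ u ⬝ᵥ A *ᵥ u) ≤ Aᵀ *ᵥ (A *ᵥ u) ⬝ᵥ Aᵀ *ᵥ (A *ᵥ u) := by
  have hB : (A * Aᵀ).IsHermitian := by
    simpa only [conjTranspose_eq_transpose_of_trivial] using isHermitian_mul_conjTranspose_self A
  have hAAt : ∀ s, Aᵀ *ᵥ s ⬝ᵥ Aᵀ *ᵥ s = s ⬝ᵥ (A * Aᵀ) *ᵥ s := fun s => by
    simpa only [one_mulVec, Matrix.mul_one] using A.transpose_mulVec_dotProduct_mulVec 1 s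
  rw [hAAt, hB.dotProduct_mulVec_eq_sum, hB.eigenvectorBasis.dotProduct_eq_sum, Finset.mul_sum]
  refine Finset.sum_le_sum fun i _ => ?_
  set e : Fin m → ℝ := ⇑(hB.eigenvectorBasis i)
  have he : e ⬝ᵥ e = 1 := by
    have h := real_inner_self_eq_norm_sq (hB.eigenvectorBasis i)
    rwa [hB.eigenvectorBasis.orthonormal.1 i, EuclideanSpace.inner_eq_star_dotProduct,
      star_trivial, one_pow] at h
  have hμ : hB.eigenvalues i = Aᵀ *ᵥ e ⬝ᵥ Aᵀ *ᵥ e := by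
    rw [hAAt, hB.mulVec_eigenvectorBasis, dotProduct_smul, he, smul_eq_mul, mul_one]
  rw [← sq]
  rcases (hμ ▸ dotProduct_self_nonneg _ : 0 ≤ hB.eigenvalues i).eq_or_lt with h0 | hpos
  · have hAe : Aᵀ *ᵥ e = 0 := dotProduct_self_eq_zero.1 (hμ ▸ h0.symm)
    have : e ⬝ᵥ A *ᵥ u = 0 := by rw [dotProduct_mulVec, ← mulVec_transpose, hAe, zero_dotProduct]
    simp [this]
  · refine mul_le_mul_of_nonneg_right (sigmaMinPos_sq_le A hpos (w := Aᵀ *ᵥ e) ?_ ?_) (sq_nonneg _)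
    · intro h
      rw [h, zero_dotProduct] at hμ
      exact hpos.ne' hμ
    · rw [mulVec_mulVec, Matrix.mul_assoc, ← mulVec_mulVec, hB.mulVec_eigenvectorBasis, mulVec_smul]

lemma sInf_mul_sigmaMinPos_sq_mul_le {m d : ℕ} (A : Matrix (Fin m) (Fin d) ℝ)
    {M : Matrix (Fin d) (Fin d) ℝ} (hM : M.PosSemidef) (u : Fin d → ℝ) :
    sInf {t : ℝ | ∃ w : Fin d → ℝ, w ≠ 0 ∧ M *ᵥ w = t • w} * sigmaMinPos A ^ 2
        * (A *ᵥ u ⬝ᵥ A *ᵥ u)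
      ≤ Aᵀ *ᵥ (A *ᵥ u) ⬝ᵥ M *ᵥ (Aᵀ *ᵥ (A *ᵥ u)) := by
  rw [mul_assoc]
  exact (mul_le_mul_of_nonneg_left (sigmaMinPos_sq_mul_le A u) hM.sInf_nonneg).trans
    (hM.1.sInf_mul_dotProduct_self_le _)

lemma sInf_mul_le_transpose_mulVec_dotProduct_mulVec {m n : Type*} [Fintype m] [Fintype n]
    [DecidableEq m] (A : Matrix m n ℝ) {M : Matrix n n ℝ} (hM : M.IsHermitian) (r : m → ℝ) :
    sInf {t : ℝ | ∃ w : m → ℝ, w ≠ 0 ∧ (A * M * Aᵀ) *ᵥ w = t • w} * (r ⬝ᵥ r)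
      ≤ Aᵀ *ᵥ r ⬝ᵥ M *ᵥ (Aᵀ *ᵥ r) := by
  have hAMA : (A * M * Aᵀ).IsHermitian := by
    simpa only [conjTranspose_eq_transpose_of_trivial] using isHermitian_mul_mul_conjTranspose A hM
  rw [A.transpose_mulVec_dotProduct_mulVec]
  exact hAMA.sInf_mul_dotProduct_self_le r

section Recursion

variable {Ω β γ : Type*} {mΩ : MeasurableSpace Ω} [MeasurableSpace β] [mγ : MeasurableSpace γ]
  {x : ℕ → Ω → γ} {v : ℕ → Ω → β} {F : β → γ → β} {v₀ : β}

lemma measurable_biSup_comap_of_recursion (hF : Measurable (Function.uncurry F))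
    (hv0 : ∀ ω, v 0 ω = v₀) (hstep : ∀ k ω, v (k + 1) ω = F (v k ω) (x k ω)) (k : ℕ) :
    Measurable[⨆ j ∈ Set.Iio k, mγ.comap (x j)] (v k) := by
  induction k with
  | zero =>
    rw [show v 0 = fun _ => v₀ from funext hv0]
    exact measurable_const
  | succ k ih =>
    rw [show v (k + 1) = fun ω => Function.uncurry F (v k ω, x k ω) from funext (hstep k)]
    have hv : (⨆ j ∈ Set.Iio k, mγ.comap (x j)) ≤ ⨆ j ∈ Set.Iio (k + 1), mγ.comap (x j) :=
      biSup_mono fun j hj => Set.Iio_subset_Iio k.le_succ hj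
    have hx : mγ.comap (x k) ≤ ⨆ j ∈ Set.Iio (k + 1), mγ.comap (x j) :=
      le_biSup (fun j => mγ.comap (x j)) (Set.mem_Iio.2 k.lt_succ_self)
    exact hF.comp ((ih.mono hv le_rfl).prodMk ((comap_measurable (x k)).mono hx le_rfl))

lemma measurable_of_recursion (hx : ∀ k, Measurable (x k)) (hF : Measurable (Function.uncurry F))
    (hv0 : ∀ ω, v 0 ω = v₀) (hstep : ∀ k ω, v (k + 1) ω = F (v k ω) (x k ω)) (k : ℕ) :
    Measurable (v k) :=
  (measurable_biSup_comap_of_recursion hF hv0 hstep k).mono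
    (iSup₂_le fun j _ => (hx j).comap_le) le_rfl

lemma ProbabilityTheory.iIndepFun.indepFun_of_recursion {μ : Measure Ω}
    (hx : ∀ k, Measurable (x k)) (hind : iIndepFun x μ) (hF : Measurable (Function.uncurry F))
    (hv0 : ∀ ω, v 0 ω = v₀) (hstep : ∀ k ω, v (k + 1) ω = F (v k ω) (x k ω)) (k : ℕ) :
    IndepFun (v k) (x k) μ := by
  have h := indep_iSup_of_disjoint (fun j => (hx j).comap_le) hind.iIndep
    (S := Set.Iio k) (T := {k}) (by simp)
  rw [iSup_singleton] at h
  rw [IndepFun_iff_Indep]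
  exact indep_of_indep_of_le_left h (measurable_biSup_comap_of_recursion hF hv0 hstep k).comap_le

end Recursion

section Expectation

variable {Ω ι : Type*} [Fintype ι] {mΩ : MeasurableSpace Ω} {μ : Measure Ω}
  {c : Ω → ι → ℝ} {X : Ω → ι → ι → ℝ} {M : Matrix ι ι ℝ}

lemma integrable_mul_apply_of_dotProduct_self_le [IsFiniteMeasure μ] (hc : Measurable c) {C : ℝ}
    (hC : ∀ ω, c ω ⬝ᵥ c ω ≤ C) (i j : ι) : Integrable (fun ω => c ω i * c ω j) μ :=
  Integrable.of_bound (by fun_prop) C <| ae_of_all _ fun ω =>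
    (Real.norm_eq_abs _ ▸ abs_mul_le_dotProduct_self (c ω) i j).trans (hC ω)

lemma integrable_dotProduct_mulVec (hc : ∀ i j, Integrable (fun ω => c ω i * c ω j) μ)
    (M : Matrix ι ι ℝ) : Integrable (fun ω => c ω ⬝ᵥ M *ᵥ c ω) μ := by
  simp_rw [dotProduct_mulVec_eq_sum_sum]
  exact integrable_finsetSum _ fun i _ => integrable_finsetSum _ fun j _ => (hc i j).const_mul _

lemma integral_dotProduct_mulVec_const (hX : ∀ i j, Integrable (fun ω => X ω i j) μ)
    (hM : ∀ i j, ∫ ω, X ω i j ∂μ = M i j) (w : ι → ℝ) :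
    ∫ ω, w ⬝ᵥ Matrix.of (X ω) *ᵥ w ∂μ = w ⬝ᵥ M *ᵥ w := by
  simp_rw [dotProduct_mulVec_eq_sum_sum, Matrix.of_apply]
  rw [integral_finsetSum _ fun i _ => integrable_finsetSum _ fun j _ => (hX i j).mul_const _]
  refine Finset.sum_congr rfl fun i _ => ?_
  rw [integral_finsetSum _ fun j _ => (hX i j).mul_const _]
  exact Finset.sum_congr rfl fun j _ => by rw [integral_mul_const, hM]

lemma ProbabilityTheory.IndepFun.integral_dotProduct_mulVec (hcX : IndepFun c X μ)
    (hc : ∀ i j, Integrable (fun ω => c ω i * c ω j) μ)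
    (hX : ∀ i j, Integrable (fun ω => X ω i j) μ)
    (hM : ∀ i j, ∫ ω, X ω i j ∂μ = M i j) :
    ∫ ω, c ω ⬝ᵥ Matrix.of (X ω) *ᵥ c ω ∂μ = ∫ ω, c ω ⬝ᵥ M *ᵥ c ω ∂μ := by
  have hind : ∀ i j, IndepFun (fun ω => X ω i j) (fun ω => c ω i * c ω j) μ := fun i j =>
    hcX.symm.comp (φ := fun X : ι → ι → ℝ => X i j) (ψ := fun c : ι → ℝ => c i * c j)
      (by fun_prop) (by fun_prop)
  have hterm : ∀ i j, Integrable (fun ω => X ω i j * (c ω i * c ω j)) μ := fun i j =>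
    (hind i j).integrable_mul (hX i j) (hc i j)
  simp_rw [dotProduct_mulVec_eq_sum_sum, Matrix.of_apply]
  rw [integral_finsetSum _ fun i _ => integrable_finsetSum _ fun j _ => hterm i j,
    integral_finsetSum (f := fun i ω => ∑ j, M i j * (c ω i * c ω j))
      _ fun i _ => integrable_finsetSum _ fun j _ => (hc i j).const_mul _]
  refine Finset.sum_congr rfl fun i _ => ?_
  rw [integral_finsetSum _ fun j _ => hterm i j,
    integral_finsetSum (f := fun j ω => M i j * (c ω i * c ω j)) _
      fun j _ => (hc i j).const_mul _]
  refine Finset.sum_congr rfl fun j _ => ?_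
  rw [(hind i j).integral_fun_mul_eq_mul_integral (hX i j).1 (hc i j).1, hM, integral_const_mul]

lemma posSemidef_of_integral_eq (hX : ∀ i j, Integrable (fun ω => X ω i j) μ)
    (hM : ∀ i j, ∫ ω, X ω i j ∂μ = M i j) (hsymm : ∀ ω i j, X ω i j = X ω j i)
    (hnonneg : ∀ ω w, 0 ≤ w ⬝ᵥ Matrix.of (X ω) *ᵥ w) : M.PosSemidef := by
  refine .of_dotProduct_mulVec_nonneg (.ext fun i j => ?_) fun w => ?_
  · rw [star_trivial, ← hM, ← hM]
    exact integral_congr_ae (ae_of_all _ fun ω => hsymm ω j i)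
  · rw [star_trivial, ← integral_dotProduct_mulVec_const hX hM w]
    exact integral_nonneg fun ω => hnonneg ω w

lemma integral_le_one_sub_mul_of_eq_sub {f g q : Ω → ℝ} {a : ℝ} (hf : Integrable f μ)
    (hq : Integrable q μ) (h : ∫ ω, g ω ∂μ = ∫ ω, f ω ∂μ - ∫ ω, q ω ∂μ)
    (hle : ∀ ω, a * f ω ≤ q ω) : ∫ ω, g ω ∂μ ≤ (1 - a) * ∫ ω, f ω ∂μ := by
  have h' := integral_mono (hf.const_mul a) hq hle
  rw [integral_const_mul] at h'
  linarith

end Expectation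

section RandomDescent

variable {d m : ℕ} {Ω : Type*}
  {A : Matrix (Fin m) (Fin d) ℝ} {b : Fin m → ℝ} {x v : ℕ → Ω → Fin d → ℝ} {v0 : Fin d → ℝ}

lemma measurable_rdStep {d m : ℕ} (A : Matrix (Fin m) (Fin d) ℝ) (b : Fin m → ℝ) :
    Measurable (Function.uncurry (rdStep A b)) := by
  unfold rdStep
  fun_prop

lemma residual_rdStep (A : Matrix (Fin m) (Fin d) ℝ) (b : Fin m → ℝ) (u y : Fin d → ℝ) :
    (A *ᵥ rdStep A b u y - b) ⬝ᵥ (A *ᵥ rdStep A b u y - b)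
      = (A *ᵥ u - b) ⬝ᵥ (A *ᵥ u - b) - ((A *ᵥ u - b) ⬝ᵥ A *ᵥ y) ^ 2 / (A *ᵥ y ⬝ᵥ A *ᵥ y) := by
  have h : A *ᵥ rdStep A b u y - b
      = (A *ᵥ u - b) - (((A *ᵥ u - b) ⬝ᵥ A *ᵥ y) / (A *ᵥ y ⬝ᵥ A *ᵥ y)) • A *ᵥ y := by
    simp only [rdStep, mulVec_sub, mulVec_smul]
    abel
  rw [h, dotProduct_self_sub_proj]

lemma residual_le_initial (hv0 : ∀ ω, v 0 ω = v0)
    (hstep : ∀ k ω, v (k + 1) ω = rdStep A b (v k ω) (x k ω)) (k : ℕ) (ω : Ω) :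
    (A *ᵥ v k ω - b) ⬝ᵥ (A *ᵥ v k ω - b) ≤ (A *ᵥ v0 - b) ⬝ᵥ (A *ᵥ v0 - b) := by
  induction k with
  | zero => rw [hv0]
  | succ k ih =>
    rw [hstep, residual_rdStep]
    exact (sub_le_self _ (div_nonneg (sq_nonneg _) (dotProduct_self_nonneg _))).trans ih

lemma integrable_residual_sq [MeasurableSpace Ω] {μ : Measure Ω} [IsFiniteMeasure μ]
    (hxmeas : ∀ k, Measurable (x k))
    (hv0 : ∀ ω, v 0 ω = v0) (hstep : ∀ k ω, v (k + 1) ω = rdStep A b (v k ω) (x k ω)) (k : ℕ) :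
    Integrable (fun ω => (A *ᵥ v k ω - b) ⬝ᵥ (A *ᵥ v k ω - b)) μ := by
  have hv := measurable_of_recursion hxmeas (measurable_rdStep A b) hv0 hstep k
  refine Integrable.of_bound (by fun_prop) ((A *ᵥ v0 - b) ⬝ᵥ (A *ᵥ v0 - b))
    (ae_of_all _ fun ω => ?_)
  rw [Real.norm_of_nonneg (dotProduct_self_nonneg _)]
  exact residual_le_initial hv0 hstep k ω

lemma integrable_transpose_residual_mul [MeasurableSpace Ω] {μ : Measure Ω} [IsFiniteMeasure μ]
    (hxmeas : ∀ k, Measurable (x k))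
    (hv0 : ∀ ω, v 0 ω = v0) (hstep : ∀ k ω, v (k + 1) ω = rdStep A b (v k ω) (x k ω))
    (k : ℕ) (i j : Fin d) :
    Integrable (fun ω => (Aᵀ *ᵥ (A *ᵥ v k ω - b)) i * (Aᵀ *ᵥ (A *ᵥ v k ω - b)) j) μ := by
  have hv := measurable_of_recursion hxmeas (measurable_rdStep A b) hv0 hstep k
  refine integrable_mul_apply_of_dotProduct_self_le (by fun_prop)
    (C := (∑ i, ∑ j, Aᵀ i j ^ 2) * ((A *ᵥ v0 - b) ⬝ᵥ (A *ᵥ v0 - b))) (fun ω => ?_) i j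
  exact (Aᵀ.mulVec_dotProduct_self_le _).trans <| mul_le_mul_of_nonneg_left
    (residual_le_initial hv0 hstep k ω) (by positivity)

lemma integral_residual_succ [MeasurableSpace Ω] {μ : Measure Ω} [IsFiniteMeasure μ]
    {M : Matrix (Fin d) (Fin d) ℝ} (hxmeas : ∀ k, Measurable (x k)) (hindep : iIndepFun x μ)
    (hv0 : ∀ ω, v 0 ω = v0) (hstep : ∀ k ω, v (k + 1) ω = rdStep A b (v k ω) (x k ω)) (k : ℕ)
    (hMint : ∀ i j, Integrable
        (fun ω => x k ω i * x k ω j / (A *ᵥ x k ω ⬝ᵥ A *ᵥ x k ω)) μ)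
    (hM : ∀ i j, ∫ ω, x k ω i * x k ω j / (A *ᵥ x k ω ⬝ᵥ A *ᵥ x k ω) ∂μ = M i j) :
    ∫ ω, (A *ᵥ v (k + 1) ω - b) ⬝ᵥ (A *ᵥ v (k + 1) ω - b) ∂μ
      = ∫ ω, (A *ᵥ v k ω - b) ⬝ᵥ (A *ᵥ v k ω - b) ∂μ
        - ∫ ω, Aᵀ *ᵥ (A *ᵥ v k ω - b) ⬝ᵥ M *ᵥ (Aᵀ *ᵥ (A *ᵥ v k ω - b)) ∂μ := by
  set X : Ω → Fin d → Fin d → ℝ := fun ω i j => x k ω i * x k ω j / (A *ᵥ x k ω ⬝ᵥ A *ᵥ x k ω)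
  have hdecrease : ∀ ω, Aᵀ *ᵥ (A *ᵥ v k ω - b) ⬝ᵥ Matrix.of (X ω) *ᵥ (Aᵀ *ᵥ (A *ᵥ v k ω - b))
      = (A *ᵥ v k ω - b) ⬝ᵥ (A *ᵥ v k ω - b)
        - (A *ᵥ v (k + 1) ω - b) ⬝ᵥ (A *ᵥ v (k + 1) ω - b) := fun ω => by
    rw [hstep, residual_rdStep, ← sq_dotProduct_div_eq_dotProduct_mulVec, mulVec_transpose,
      ← dotProduct_mulVec]
    ring
  have hind : IndepFun (fun ω => Aᵀ *ᵥ (A *ᵥ v k ω - b)) X μ :=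
    (hindep.indepFun_of_recursion hxmeas (measurable_rdStep A b) hv0 hstep k).comp
      (φ := fun u => Aᵀ *ᵥ (A *ᵥ u - b)) (ψ := fun y i j => y i * y j / (A *ᵥ y ⬝ᵥ A *ᵥ y))
      (by fun_prop) (by fun_prop)
  rw [← hind.integral_dotProduct_mulVec (integrable_transpose_residual_mul hxmeas hv0 hstep k)
    hMint hM, integral_congr_ae (ae_of_all _ hdecrease),
    integral_sub (integrable_residual_sq hxmeas hv0 hstep k)
      (integrable_residual_sq hxmeas hv0 hstep (k + 1))]
  ring

end RandomDescent

/-- for random descent iterates (consistent system),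
`E(‖Av^{k+1} − b‖²) ≤ (1 − λ_min(M)σ_min(A)²)·E(‖Av^k − b‖²)` and also
`E(‖Av^{k+1} − b‖²) ≤ (1 − λ_min(A M Aᵀ))·E(‖Av^k − b‖²)`, where `M = E(xxᵀ/‖Ax‖²)`. -/
theorem rd_linear_residual_contraction
    {d m : ℕ} {Ω : Type*} [MeasurableSpace Ω] (μ : Measure Ω) [IsProbabilityMeasure μ]
    (A : Matrix (Fin m) (Fin d) ℝ) (b : Fin m → ℝ)
    (hcons : ∃ vhat : Fin d → ℝ, A.mulVec vhat = b)
    (x : ℕ → Ω → Fin d → ℝ)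
    (hxmeas : ∀ k, Measurable (x k))
    (hindep : iIndepFun x μ)
    (M : Matrix (Fin d) (Fin d) ℝ)
    (hMint : ∀ k i j, Integrable
        (fun ω => x k ω i * x k ω j / (A.mulVec (x k ω) ⬝ᵥ A.mulVec (x k ω))) μ)
    (hM : ∀ k i j, ∫ ω, x k ω i * x k ω j / (A.mulVec (x k ω) ⬝ᵥ A.mulVec (x k ω)) ∂μ
        = M i j)
    (lminM lminAMA : ℝ)
    (hlminM : lminM = sInf {t : ℝ | ∃ w : Fin d → ℝ, w ≠ 0 ∧ M.mulVec w = t • w})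
    (hlminAMA : lminAMA
        = sInf {t : ℝ | ∃ w : Fin m → ℝ, w ≠ 0 ∧ (A * M * Aᵀ).mulVec w = t • w})
    (v0 : Fin d → ℝ)
    (v : ℕ → Ω → Fin d → ℝ)
    (hv0 : ∀ ω, v 0 ω = v0)
    (hstep : ∀ k ω, v (k + 1) ω = rdStep A b (v k ω) (x k ω)) :
    ∀ k, (∫ ω, (A.mulVec (v (k + 1) ω) - b) ⬝ᵥ (A.mulVec (v (k + 1) ω) - b) ∂μ
        ≤ (1 - lminM * sigmaMinPos A ^ 2) *
            ∫ ω, (A.mulVec (v k ω) - b) ⬝ᵥ (A.mulVec (v k ω) - b) ∂μ) ∧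
      (∫ ω, (A.mulVec (v (k + 1) ω) - b) ⬝ᵥ (A.mulVec (v (k + 1) ω) - b) ∂μ
        ≤ (1 - lminAMA) *
            ∫ ω, (A.mulVec (v k ω) - b) ⬝ᵥ (A.mulVec (v k ω) - b) ∂μ) := by
  obtain ⟨vhat, rfl⟩ := hcons
  have hMpsd : M.PosSemidef := posSemidef_of_integral_eq (hMint 0) (hM 0)
    (fun ω i j => by rw [mul_comm (x 0 ω i)])
    (fun ω w => by
      rw [← sq_dotProduct_div_eq_dotProduct_mulVec]
      exact div_nonneg (sq_nonneg _) (dotProduct_self_nonneg _))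
  intro k
  have hres : ∀ ω, A *ᵥ v k ω - A *ᵥ vhat = A *ᵥ (v k ω - vhat) := fun ω => (mulVec_sub ..).symm
  have hdecrease := integral_residual_succ hxmeas hindep hv0 hstep k (hMint k) (hM k)
  have hf := integrable_residual_sq (μ := μ) hxmeas hv0 hstep k
  have hq := integrable_dotProduct_mulVec
    (integrable_transpose_residual_mul (μ := μ) hxmeas hv0 hstep k) M
  refine ⟨integral_le_one_sub_mul_of_eq_sub hf hq hdecrease fun ω => ?_,
    integral_le_one_sub_mul_of_eq_sub hf hq hdecrease fun ω => ?_⟩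
  · rw [hlminM, hres]
    exact sInf_mul_sigmaMinPos_sq_mul_le A hMpsd _
  · rw [hlminAMA]
    exact sInf_mul_le_transpose_mulVec_dotProduct_mulVec A hMpsd.1 _
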